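/- Let Ω ⊆ ℝᵐ be open with data (γ, ℓ, ℓ², 𝐘) in a chart, Σ := {x ∈ Ω : x₁ = 0} and U := {X ∈ ℝᵐ : X₁ = 0}. Let z : Ω → ℝ be smooth and nowhere vanishing and ζ : Ω → ℝᵐ smooth, and define the gauge-transformed data ℓ'_q := z(q)·(ℓ_q + γ_q(ζ(q),·)) and 𝐘'_p(X,Y) := z(p)·𝐘_p(X,Y) + (1/2)(ℓ_p(X)·Dz(p)(Y) + ℓ_p(Y)·Dz(p)(X)) + (1/2)(ℒ_{zζ}γ)_p(X,Y), while γ' := γ. For every normal pair (T,C) of Σ, its gauge transform (T',C') := (T − C·ζ, z⁻¹·C) satisfies, at every p ∈ Σ ∩ Ω and for all X, Y ∈ U: the second fundamental form computed from the data (γ, ℓ', 𝐘') along (T',C') equals the one computed from (γ, ℓ, 𝐘) along (T,C), i.e. 𝒦'^{(T',C')}_p(X,Y) = 𝒦^{(T,C)}_p(X,Y). -/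

import Mathlib

/-- The coordinate Lie derivative of the bilinear-form field `γ` along the vector
field `T`: `(ℒ_Tγ)_p(X,Y) = (Dγ(p)(T(p)))(X,Y) + γ_p(DT(p)X, Y) + γ_p(X, DT(p)Y)`. -/
noncomputable def lieD {m : ℕ}
    (γ : (Fin m → ℝ) → (Fin m → ℝ) →L[ℝ] (Fin m → ℝ) →L[ℝ] ℝ)
    (T : (Fin m → ℝ) → (Fin m → ℝ)) (p X Y : Fin m → ℝ) : ℝ :=
  fderiv ℝ γ p (T p) X Y + γ p (fderiv ℝ T p X) Y + γ p X (fderiv ℝ T p Y)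

/-- The second fundamental form of `Σ` along the pair `(T,C)` with respect to the
data `(γ, ℓ, 𝐘)`. -/
noncomputable def secondFF {m : ℕ}
    (γ : (Fin m → ℝ) → (Fin m → ℝ) →L[ℝ] (Fin m → ℝ) →L[ℝ] ℝ)
    (ℓ : (Fin m → ℝ) → (Fin m → ℝ) →L[ℝ] ℝ)
    (Yd : (Fin m → ℝ) → (Fin m → ℝ) → (Fin m → ℝ) → ℝ)
    (T : (Fin m → ℝ) → (Fin m → ℝ)) (C : (Fin m → ℝ) → ℝ)
    (p X Y : Fin m → ℝ) : ℝ :=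
  (1 / 2) * lieD γ T p X Y + C p * Yd p X Y
    + (1 / 2) * (fderiv ℝ C p X * ℓ p Y + fderiv ℝ C p Y * ℓ p X)

/-- the second fundamental form of `Σ = {x₁ = 0}` along a normal
pair is gauge invariant: for gauge parameters `(z,ζ)` with transformed data
`ℓ' = z(ℓ + γ(ζ,·))`, `𝐘' = z𝐘 + ℓ ⊗ₛ dz + (1/2)ℒ_{zζ}γ` (and `γ' = γ`), and the
transformed pair `(T' , C') = (T − Cζ, z⁻¹C)`, one has
`𝒦'^{(T',C')}_p(X,Y) = 𝒦^{(T,C)}_p(X,Y)` at `p ∈ Σ ∩ Ω` on tangent vectors. -/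
theorem secondFF_gauge_invariant {m : ℕ} [NeZero m] (hm : 2 ≤ m)
    (Ω : Set (Fin m → ℝ)) (hΩ : IsOpen Ω)
    (γ : (Fin m → ℝ) → (Fin m → ℝ) →L[ℝ] (Fin m → ℝ) →L[ℝ] ℝ)
    (ℓ : (Fin m → ℝ) → (Fin m → ℝ) →L[ℝ] ℝ)
    (ℓ2 : (Fin m → ℝ) → ℝ)
    (Yd : (Fin m → ℝ) → (Fin m → ℝ) → (Fin m → ℝ) → ℝ)
    (hγ : ContDiffOn ℝ (⊤ : ℕ∞) γ Ω) (hℓ : ContDiffOn ℝ (⊤ : ℕ∞) ℓ Ω)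
    (hℓ2 : ContDiffOn ℝ (⊤ : ℕ∞) ℓ2 Ω)
    (hγsym : ∀ q ∈ Ω, ∀ X Y : Fin m → ℝ, γ q X Y = γ q Y X)
    (hYsym : ∀ q ∈ Ω, ∀ X Y : Fin m → ℝ, Yd q X Y = Yd q Y X)
    (T : (Fin m → ℝ) → (Fin m → ℝ)) (C : (Fin m → ℝ) → ℝ)
    (hT : ContDiffOn ℝ (⊤ : ℕ∞) T Ω) (hC : ContDiffOn ℝ (⊤ : ℕ∞) C Ω)
    (hNP : ∀ q ∈ Ω, q 0 = 0 → ∀ X : Fin m → ℝ, X 0 = 0 →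
      C q * ℓ q X + γ q (T q) X = 0)
    (z : (Fin m → ℝ) → ℝ) (hz : ContDiffOn ℝ (⊤ : ℕ∞) z Ω)
    (hz0 : ∀ q ∈ Ω, z q ≠ 0)
    (ζ : (Fin m → ℝ) → (Fin m → ℝ)) (hζ : ContDiffOn ℝ (⊤ : ℕ∞) ζ Ω)
    (p : Fin m → ℝ) (hpΩ : p ∈ Ω) (hp0 : p 0 = 0)
    (X Y : Fin m → ℝ) (hX : X 0 = 0) (hY : Y 0 = 0) :
    secondFF γ (fun q => z q • (ℓ q + γ q (ζ q)))
        (fun q v w => z q * Yd q v w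
          + (1 / 2) * (ℓ q v * fderiv ℝ z q w + ℓ q w * fderiv ℝ z q v)
          + (1 / 2) * lieD γ (fun r => z r • ζ r) q v w)
        (fun q => T q - C q • ζ q) (fun q => (z q)⁻¹ * C q) p X Y
      = secondFF γ ℓ Yd T C p X Y := by
  have hnb : Ω ∈ nhds p := hΩ.mem_nhds hpΩ
  have hzd : DifferentiableAt ℝ z p := (hz.contDiffAt hnb).differentiableAt (by simp)
  have hCd : DifferentiableAt ℝ C p := (hC.contDiffAt hnb).differentiableAt (by simp)
  have hζd : DifferentiableAt ℝ ζ p := (hζ.contDiffAt hnb).differentiableAt (by simp)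
  have hTd : DifferentiableAt ℝ T p := (hT.contDiffAt hnb).differentiableAt (by simp)
  have h0 : z p ≠ 0 := hz0 p hpΩ
  have hi : HasFDerivAt (fun q => (z q)⁻¹) (-(z p ^ 2)⁻¹ • fderiv ℝ z p) p :=
    (hasDerivAt_inv h0).comp_hasFDerivAt p hzd.hasFDerivAt
  have h1 : fderiv ℝ (fun q => (z q)⁻¹ * C q) p
      = (z p)⁻¹ • fderiv ℝ C p + C p • -(z p ^ 2)⁻¹ • fderiv ℝ z p :=
    (hi.mul hCd.hasFDerivAt).fderiv
  have h2 : fderiv ℝ (fun q => T q - C q • ζ q) p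
      = fderiv ℝ T p - (C p • fderiv ℝ ζ p + (fderiv ℝ C p).smulRight (ζ p)) :=
    (hTd.hasFDerivAt.sub (hCd.hasFDerivAt.smul hζd.hasFDerivAt)).fderiv
  have h3 : fderiv ℝ (fun r => z r • ζ r) p
      = z p • fderiv ℝ ζ p + (fderiv ℝ z p).smulRight (ζ p) :=
    (hzd.hasFDerivAt.smul hζd.hasFDerivAt).fderiv
  have hs1 : γ p X (ζ p) = γ p (ζ p) X := hγsym p hpΩ X (ζ p)
  have hs2 : γ p Y (ζ p) = γ p (ζ p) Y := hγsym p hpΩ Y (ζ p)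
  simp only [secondFF, lieD, h1, h2, h3, ContinuousLinearMap.map_sub,
    ContinuousLinearMap.map_add, ContinuousLinearMap.map_smul,
    ContinuousLinearMap.sub_apply, ContinuousLinearMap.add_apply,
    ContinuousLinearMap.smul_apply, ContinuousLinearMap.smulRight_apply,
    ContinuousLinearMap.coe_smul', Pi.smul_apply, smul_eq_mul,
    ContinuousLinearMap.neg_apply, neg_mul, mul_neg, hs1, hs2, map_sub, map_smul]
  field_simp
  ring
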